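/- arXiv:0912.0902 — 8 statements merged into one kernel-verified Lean document; each statement's English description precedes it below -/
import Mathlib

section
/- Revelation principle: let g : D → D be a bijection. If S is consistent for the functional T relative to a class F of measures on D, then S_g(x,y) := S(g⁻¹(x), y) is consistent for the functional T_g(F) := g(T(F)); moreover if S is strictly consistent for T then S_g is strictly consistent for T_g, and hence if T is elicitable so is T_g. -/
open MeasureTheory Set

/-- Osband's revelation principle (Theorem 4 of the paper): for a bijection
`g : D → D` with inverse `ginv`, if `S` is consistent for `T` then
`S_g(x,y) = S(g⁻¹(x),y)` is consistent for `T_g = g ∘ T`; strict consistency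
transfers as well, and hence elicitability transfers. -/
theorem revelation_principle
    (D : Set ℝ) (𝓕 : Set (Measure ℝ)) (T : Measure ℝ → Set ℝ)
    (hTD : ∀ F ∈ 𝓕, T F ⊆ D)
    (g ginv : ℝ → ℝ) (hg : Set.BijOn g D D)
    (hinv₁ : ∀ x ∈ D, ginv (g x) = x) (hinv₂ : ∀ x ∈ D, g (ginv x) = x)
    (hinvD : ∀ x ∈ D, ginv x ∈ D) :
    -- (b) consistency transfers
    (∀ S : ℝ → ℝ → ℝ,
      (∀ F ∈ 𝓕, ∀ t ∈ T F, ∀ x ∈ D, ∫ y, S t y ∂F ≤ ∫ y, S x y ∂F) →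
      (∀ F ∈ 𝓕, ∀ t ∈ g '' (T F), ∀ x ∈ D,
        ∫ y, S (ginv t) y ∂F ≤ ∫ y, S (ginv x) y ∂F)) ∧
    -- (c) strict consistency transfers
    (∀ S : ℝ → ℝ → ℝ,
      (∀ F ∈ 𝓕, ∀ t ∈ T F, ∀ x ∈ D,
        (∫ y, S t y ∂F ≤ ∫ y, S x y ∂F) ∧
        ((∫ y, S t y ∂F) = (∫ y, S x y ∂F) → x ∈ T F)) →
      (∀ F ∈ 𝓕, ∀ t ∈ g '' (T F), ∀ x ∈ D,
        (∫ y, S (ginv t) y ∂F ≤ ∫ y, S (ginv x) y ∂F) ∧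
        ((∫ y, S (ginv t) y ∂F) = (∫ y, S (ginv x) y ∂F) → x ∈ g '' (T F)))) ∧
    -- (a) elicitability transfers
    ((∃ S : ℝ → ℝ → ℝ, (∀ x y, 0 ≤ S x y) ∧
      ∀ F ∈ 𝓕, ∀ t ∈ T F, ∀ x ∈ D,
        (∫ y, S t y ∂F ≤ ∫ y, S x y ∂F) ∧
        ((∫ y, S t y ∂F) = (∫ y, S x y ∂F) → x ∈ T F)) →
     (∃ S' : ℝ → ℝ → ℝ, (∀ x y, 0 ≤ S' x y) ∧
      ∀ F ∈ 𝓕, ∀ t ∈ g '' (T F), ∀ x ∈ D,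
        (∫ y, S' t y ∂F ≤ ∫ y, S' x y ∂F) ∧
        ((∫ y, S' t y ∂F) = (∫ y, S' x y ∂F) → x ∈ g '' (T F)))) := by
  refine ⟨?_, ?_, ?_⟩
  · intro S hS F hF t ht x hx
    obtain ⟨t₀, ht₀, rfl⟩ := ht
    rw [hinv₁ t₀ (hTD F hF ht₀)]
    exact hS F hF t₀ ht₀ (ginv x) (hinvD x hx)
  · intro S hS F hF t ht x hx
    obtain ⟨t₀, ht₀, rfl⟩ := ht
    rw [hinv₁ t₀ (hTD F hF ht₀)]
    obtain ⟨h1, h2⟩ := hS F hF t₀ ht₀ (ginv x) (hinvD x hx)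
    exact ⟨h1, fun he => ⟨ginv x, h2 he, hinv₂ x hx⟩⟩
  · rintro ⟨S, hS0, hS⟩
    refine ⟨fun x y => S (ginv x) y, fun x y => hS0 _ _, ?_⟩
    intro F hF t ht x hx
    obtain ⟨t₀, ht₀, rfl⟩ := ht
    beta_reduce
    rw [hinv₁ t₀ (hTD F hF ht₀)]
    obtain ⟨h1, h2⟩ := hS F hF t₀ ht₀ (ginv x) (hinvD x hx)
    exact ⟨h1, fun he => ⟨ginv x, h2 he, hinv₂ x hx⟩⟩
end

section
/- Weighted scoring theorem: let w : D → [0,∞) be a weight function, and for F with density f (w.r.t. a dominating measure) with 0 < ∫ w f < ∞ let F^(w) be the measure with density proportional to w·f. If S is consistent for the functional T relative to F, then S^(w)(x,y) := w(y) S(x,y) is consistent for the functional T^(w)(F) := T(F^(w)) relative to the subclass F^(w) of distributions for which F^(w) ∈ F; strict consistency of S implies strict consistency of S^(w). -/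
open MeasureTheory Set

private lemma wsc_integral_eq (w : ℝ → ℝ) (hw : ∀ y, 0 ≤ w y) (hwm : Measurable w)
    (F : Measure ℝ) (g : ℝ → ℝ) :
    ∫ y, g y ∂((∫⁻ y, ENNReal.ofReal (w y) ∂F)⁻¹ •
        F.withDensity (fun y => ENNReal.ofReal (w y))) =
      ((∫⁻ y, ENNReal.ofReal (w y) ∂F)⁻¹).toReal * ∫ y, w y * g y ∂F := by
  rw [integral_smul_measure]
  have : F.withDensity (fun y => ENNReal.ofReal (w y)) =
      F.withDensity (fun y => (((fun y => (w y).toNNReal) y : NNReal) : ENNReal)) := rfl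
  rw [this, integral_withDensity_eq_integral_smul (by fun_prop) g]
  simp only [NNReal.smul_def, smul_eq_mul, Real.coe_toNNReal _ (hw _)]

/-- Weighted scoring theorem (Theorem 5 of the paper).  For a weight function
`w ≥ 0`, and `F` with `0 < ∫ w dF < ∞`, the reweighted distribution
`F^(w) = (∫ w dF)⁻¹ • F.withDensity w` has density proportional to `w·f`.
If `S` is consistent for `T` relative to `𝓕`, then `S^(w)(x,y) = w(y)S(x,y)`
is consistent for `T^(w)(F) = T(F^(w))` relative to the subclass of `F ∈ 𝓕`
with `F^(w) ∈ 𝓕`; strict consistency transfers as well. -/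
theorem weighted_scoring_theorem
    (D : Set ℝ) (𝓕 : Set (Measure ℝ)) (T : Measure ℝ → Set ℝ)
    (w : ℝ → ℝ) (hw : ∀ y, 0 ≤ w y) (hwm : Measurable w)
    (S : ℝ → ℝ → ℝ) (hS : ∀ x y, 0 ≤ S x y)
    (Fw : Measure ℝ → Measure ℝ)
    (hFw : ∀ F : Measure ℝ,
      Fw F = (∫⁻ y, ENNReal.ofReal (w y) ∂F)⁻¹ •
        F.withDensity (fun y => ENNReal.ofReal (w y))) :
    -- (b) consistency transfers
    ((∀ F ∈ 𝓕, ∀ t ∈ T F, ∀ x ∈ D, ∫ y, S t y ∂F ≤ ∫ y, S x y ∂F) →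
      ∀ F ∈ 𝓕, Fw F ∈ 𝓕 →
        (0 < ∫⁻ y, ENNReal.ofReal (w y) ∂F) →
        (∫⁻ y, ENNReal.ofReal (w y) ∂F) < ⊤ →
        ∀ t ∈ T (Fw F), ∀ x ∈ D,
          ∫ y, w y * S t y ∂F ≤ ∫ y, w y * S x y ∂F) ∧
    -- (c) strict consistency transfers
    ((∀ F ∈ 𝓕, ∀ t ∈ T F, ∀ x ∈ D,
        (∫ y, S t y ∂F ≤ ∫ y, S x y ∂F) ∧
        ((∫ y, S t y ∂F) = (∫ y, S x y ∂F) → x ∈ T F)) →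
      ∀ F ∈ 𝓕, Fw F ∈ 𝓕 →
        (0 < ∫⁻ y, ENNReal.ofReal (w y) ∂F) →
        (∫⁻ y, ENNReal.ofReal (w y) ∂F) < ⊤ →
        ∀ t ∈ T (Fw F), ∀ x ∈ D,
          (∫ y, w y * S t y ∂F ≤ ∫ y, w y * S x y ∂F) ∧
          ((∫ y, w y * S t y ∂F) = (∫ y, w y * S x y ∂F) → x ∈ T (Fw F))) := by
  have key : ∀ (F : Measure ℝ) (g : ℝ → ℝ),
      ∫ y, g y ∂(Fw F) =
        ((∫⁻ y, ENNReal.ofReal (w y) ∂F)⁻¹).toReal * ∫ y, w y * g y ∂F := by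
    intro F g
    rw [hFw F]
    exact wsc_integral_eq w hw hwm F g
  have cpos : ∀ (F : Measure ℝ),
      (0 < ∫⁻ y, ENNReal.ofReal (w y) ∂F) →
      (∫⁻ y, ENNReal.ofReal (w y) ∂F) < ⊤ →
      0 < ((∫⁻ y, ENNReal.ofReal (w y) ∂F)⁻¹).toReal := by
    intro F h0 htop
    apply ENNReal.toReal_pos
    · simpa using htop.ne
    · simpa using h0.ne'
  constructor
  · intro hcons F _hF hFwF h0 htop t ht x hx
    have := hcons (Fw F) hFwF t ht x hx
    rw [key F (S t), key F (S x)] at this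
    exact le_of_mul_le_mul_left this (cpos F h0 htop)
  · intro hcons F _hF hFwF h0 htop t ht x hx
    obtain ⟨hle, heq⟩ := hcons (Fw F) hFwF t ht x hx
    rw [key F (S t), key F (S x)] at hle heq
    have hc := cpos F h0 htop
    exact ⟨le_of_mul_le_mul_left hle hc,
      fun h => heq (by rw [h])⟩
end

section
/- Any Bregman scoring function S(x,y) = φ(y) − φ(x) − φ'(x)(y−x), where φ is convex with subgradient φ', is consistent for the mean functional relative to the class of probability measures F on an interval I for which E_F[Y] and E_F[φ(Y)] exist and are finite; if φ is strictly convex, S is strictly consistent for the mean. -/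
open MeasureTheory Set

/-- Savage's theorem, sufficiency part (Theorem 7(b,c) of the paper): any
Bregman scoring function `S(x,y) = φ(y) − φ(x) − φ'(x)(y−x)`, with `φ`
convex with subgradient `φ'`, is consistent for the mean functional; if `φ`
is strictly convex, `S` is strictly consistent. -/
theorem bregman_consistent_for_mean
    (I : Set ℝ) (hI : Convex ℝ I) (φ φ' : ℝ → ℝ)
    (hconv : ConvexOn ℝ I φ)
    (hsub : ∀ x ∈ I, ∀ y ∈ I, φ x + φ' x * (y - x) ≤ φ y)
    (S : ℝ → ℝ → ℝ) (hSdef : ∀ x y, S x y = φ y - φ x - φ' x * (y - x))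
    (F : Measure ℝ) [IsProbabilityMeasure F] (hFI : ∀ᵐ y ∂F, y ∈ I)
    (hint1 : Integrable (fun y => y) F) (hint2 : Integrable (fun y => φ y) F)
    (hmean : (∫ y, y ∂F) ∈ I) :
    (∀ x ∈ I, ∫ y, S (∫ y, y ∂F) y ∂F ≤ ∫ y, S x y ∂F) ∧
    (StrictConvexOn ℝ I φ → ∀ x ∈ I, x ≠ (∫ y, y ∂F) →
      ∫ y, S (∫ y, y ∂F) y ∂F < ∫ y, S x y ∂F) := by
  set μ := ∫ y, y ∂F with hμ
  have key : ∀ x, ∫ y, S x y ∂F = (∫ y, φ y ∂F) - φ x - φ' x * (μ - x) := by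
    intro x
    have h1 : Integrable (fun y => φ y - φ x) F := hint2.sub (integrable_const _)
    have h2 : Integrable (fun y => φ' x * (y - x)) F :=
      ((hint1.sub (integrable_const _)).const_mul _)
    simp only [hSdef]
    rw [integral_sub h1 h2, integral_sub hint2 (integrable_const _),
      integral_const_mul, integral_sub hint1 (integrable_const _)]
    simp [hμ]
  have keyμ : ∫ y, S μ y ∂F = (∫ y, φ y ∂F) - φ μ := by
    rw [key μ]; ring
  -- strict subgradient inequality lemma
  have strictsub : StrictConvexOn ℝ I φ → ∀ x ∈ I, x ≠ μ →
      φ x + φ' x * (μ - x) < φ μ := by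
    intro hst x hx hne
    have hz : (1/2 : ℝ) • x + (1/2 : ℝ) • μ ∈ I :=
      hI hx hmean (by norm_num) (by norm_num) (by norm_num)
    have hφz : φ ((1/2 : ℝ) • x + (1/2 : ℝ) • μ) <
        (1/2 : ℝ) • φ x + (1/2 : ℝ) • φ μ :=
      hst.2 hx hmean hne (by norm_num) (by norm_num) (by norm_num)
    have hsz := hsub x hx _ hz
    simp only [smul_eq_mul] at hφz hz hsz
    nlinarith [hsz, hφz]
  refine ⟨fun x hx => ?_, fun hst x hx hne => ?_⟩
  · have := hsub x hx μ hmean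
    rw [keyμ, key x]; linarith
  · have := strictsub hst x hx hne
    rw [keyμ, key x]; linarith
end

section
/- Consistency for ratios of expectations: let r : I → ℝ and s : I → (0,∞) be measurable, φ convex with subgradient φ'. Then the scoring function S(x,y) = s(y)(φ(y) − φ(x)) − φ'(x)(r(y) − x s(y)) + φ'(y)(r(y) − y s(y)) is consistent for the functional T(F) = E_F[r(Y)] / E_F[s(Y)], relative to the class of probability measures F on I for which E_F[r(Y)], E_F[s(Y)], E_F[r(Y)φ'(Y)], E_F[s(Y)φ(Y)] and E_F[Y s(Y) φ'(Y)] exist and are finite; if φ is strictly convex, S is strictly consistent. -/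
open MeasureTheory Set

/-!
Write `t = E[r] / E[s]`. For every `y`, `S x y - S t y` is affine in `r y` and `s y`, so taking
expectations and using `E[r] = t E[s]` gives
`E[S x Y] - E[S t Y] = E[s] * (φ t - φ x - φ' x * (t - x))`,
a positive multiple of the Bregman divergence of `φ` between `t` and `x`. This is nonnegative by
the subgradient inequality, and positive for `x ≠ t` when `φ` is strictly convex.
-/

lemma StrictConvexOn.add_mul_sub_lt {I : Set ℝ} {φ : ℝ → ℝ} (hφ : StrictConvexOn ℝ I φ)
    {x t g : ℝ} (hx : x ∈ I) (ht : t ∈ I) (hxt : x ≠ t)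
    (hg : ∀ y ∈ I, φ x + g * (y - x) ≤ φ y) :
    φ x + g * (t - x) < φ t := by
  have hmid : (1 / 2 : ℝ) • x + (1 / 2 : ℝ) • t = (x + t) / 2 := by
    simp only [smul_eq_mul]; ring
  have hmI : (x + t) / 2 ∈ I := hmid ▸ hφ.1 hx ht (by norm_num) (by norm_num) (by norm_num)
  have hlt := hφ.2 hx ht hxt (by norm_num : (0 : ℝ) < 1 / 2) (by norm_num : (0 : ℝ) < 1 / 2)
    (by norm_num)
  rw [hmid, smul_eq_mul, smul_eq_mul] at hlt
  have hsupport := hg _ hmI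
  linarith

lemma integral_pos_of_ae_pos {α : Type*} [MeasurableSpace α] {μ : Measure α} [NeZero μ]
    {f : α → ℝ} (hfi : Integrable f μ) (hf : ∀ᵐ x ∂μ, 0 < f x) : 0 < ∫ x, f x ∂μ := by
  rw [integral_pos_iff_support_of_nonneg_ae (hf.mono fun _ => le_of_lt) hfi]
  calc 0 < μ univ := Measure.measure_univ_pos.2 (NeZero.ne μ)
    _ ≤ μ (Function.support f) := measure_mono_ae (hf.mono fun _ hx _ => hx.ne')

section RatioScore

variable (r s φ φ' : ℝ → ℝ)

def ratioScore (x y : ℝ) : ℝ :=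
  s y * (φ y - φ x) - φ' x * (r y - x * s y) + φ' y * (r y - y * s y)

variable {r s φ φ'} {F : Measure ℝ}

lemma integrable_ratioScore (hr : Integrable r F) (hs : Integrable s F)
    (hrφ' : Integrable (fun y => r y * φ' y) F) (hsφ : Integrable (fun y => s y * φ y) F)
    (hsφ' : Integrable (fun y => y * s y * φ' y) F) (x : ℝ) :
    Integrable (ratioScore r s φ φ' x) F :=
  ((((hsφ.add hrφ').sub hsφ').add (hs.const_mul (φ' x * x - φ x))).sub
    (hr.const_mul (φ' x))).congr
    (ae_of_all _ fun y => by simp only [ratioScore, Pi.add_apply, Pi.sub_apply]; ring)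

lemma ratioScore_sub_ratioScore (x t y : ℝ) :
    ratioScore r s φ φ' x y - ratioScore r s φ φ' t y =
      (φ t - φ x + φ' x * x - φ' t * t) * s y + (φ' t - φ' x) * r y := by
  simp only [ratioScore]; ring

lemma integral_ratioScore_sub_integral_ratioScore (hr : Integrable r F) (hs : Integrable s F)
    (hrφ' : Integrable (fun y => r y * φ' y) F) (hsφ : Integrable (fun y => s y * φ y) F)
    (hsφ' : Integrable (fun y => y * s y * φ' y) F) (x t : ℝ) :
    ∫ y, ratioScore r s φ φ' x y ∂F - ∫ y, ratioScore r s φ φ' t y ∂F =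
      (φ t - φ x + φ' x * x - φ' t * t) * ∫ y, s y ∂F + (φ' t - φ' x) * ∫ y, r y ∂F := by
  have hS := integrable_ratioScore hr hs hrφ' hsφ hsφ'
  rw [← integral_sub (hS x) (hS t)]
  simp only [ratioScore_sub_ratioScore]
  rw [integral_add (hs.const_mul _) (hr.const_mul _), integral_const_mul, integral_const_mul]

lemma integral_ratioScore_sub_integral_ratioScore_ratio (hr : Integrable r F)
    (hs : Integrable s F) (hrφ' : Integrable (fun y => r y * φ' y) F)
    (hsφ : Integrable (fun y => s y * φ y) F) (hsφ' : Integrable (fun y => y * s y * φ' y) F)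
    (hEs : ∫ y, s y ∂F ≠ 0) (x : ℝ) :
    ∫ y, ratioScore r s φ φ' x y ∂F -
        ∫ y, ratioScore r s φ φ' ((∫ y, r y ∂F) / (∫ y, s y ∂F)) y ∂F =
      (∫ y, s y ∂F) * (φ ((∫ y, r y ∂F) / (∫ y, s y ∂F)) -
        (φ x + φ' x * ((∫ y, r y ∂F) / (∫ y, s y ∂F) - x))) := by
  rw [integral_ratioScore_sub_integral_ratioScore hr hs hrφ' hsφ hsφ']
  field_simp
  ring

end RatioScore

theorem bregman_consistent_for_ratio_of_expectations_general
    (I : Set ℝ)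
    (r s : ℝ → ℝ)
    (hspos : ∀ y ∈ I, 0 < s y)
    (φ φ' : ℝ → ℝ)
    (hsub : ∀ x ∈ I, ∀ y ∈ I, φ x + φ' x * (y - x) ≤ φ y)
    (S : ℝ → ℝ → ℝ)
    (hSdef : ∀ x y, S x y =
      s y * (φ y - φ x) - φ' x * (r y - x * s y) + φ' y * (r y - y * s y))
    (F : Measure ℝ) [IsProbabilityMeasure F] (hFI : ∀ᵐ y ∂F, y ∈ I)
    (hint1 : Integrable (fun y => r y) F)
    (hint2 : Integrable (fun y => s y) F)
    (hint3 : Integrable (fun y => r y * φ' y) F)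
    (hint4 : Integrable (fun y => s y * φ y) F)
    (hint5 : Integrable (fun y => y * s y * φ' y) F)
    (hTI : (∫ y, r y ∂F) / (∫ y, s y ∂F) ∈ I) :
    (∀ x ∈ I,
      ∫ y, S ((∫ y, r y ∂F) / (∫ y, s y ∂F)) y ∂F ≤ ∫ y, S x y ∂F) ∧
    (StrictConvexOn ℝ I φ → ∀ x ∈ I, x ≠ (∫ y, r y ∂F) / (∫ y, s y ∂F) →
      ∫ y, S ((∫ y, r y ∂F) / (∫ y, s y ∂F)) y ∂F < ∫ y, S x y ∂F) := by
  obtain rfl : S = ratioScore r s φ φ' := funext fun x => funext (hSdef x)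
  have hEs : 0 < ∫ y, s y ∂F :=
    integral_pos_of_ae_pos hint2 (hFI.mono fun y hy => hspos y hy)
  have hgap := integral_ratioScore_sub_integral_ratioScore_ratio hint1 hint2 hint3 hint4 hint5
    hEs.ne'
  refine ⟨fun x hx => ?_, fun hstrict x hx hxt => ?_⟩
  · have := mul_nonneg hEs.le (sub_nonneg.2 (hsub x hx _ hTI))
    linarith [hgap x]
  · have := mul_pos hEs (sub_pos.2 (hstrict.add_mul_sub_lt hx hTI hxt (hsub x hx)))
    linarith [hgap x]

/-- Theorem 8(b) of the paper: consistency of the Bregman-type scoring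
function for ratios of expectations `T(F) = E_F[r(Y)]/E_F[s(Y)]`. -/
theorem bregman_consistent_for_ratio_of_expectations
    (I : Set ℝ) (hI : Convex ℝ I)
    (r s : ℝ → ℝ) (hr : Measurable r) (hs : Measurable s)
    (hspos : ∀ y ∈ I, 0 < s y)
    (φ φ' : ℝ → ℝ) (hconv : ConvexOn ℝ I φ)
    (hsub : ∀ x ∈ I, ∀ y ∈ I, φ x + φ' x * (y - x) ≤ φ y)
    (S : ℝ → ℝ → ℝ)
    (hSdef : ∀ x y, S x y =
      s y * (φ y - φ x) - φ' x * (r y - x * s y) + φ' y * (r y - y * s y))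
    (F : Measure ℝ) [IsProbabilityMeasure F] (hFI : ∀ᵐ y ∂F, y ∈ I)
    (hint1 : Integrable (fun y => r y) F)
    (hint2 : Integrable (fun y => s y) F)
    (hint3 : Integrable (fun y => r y * φ' y) F)
    (hint4 : Integrable (fun y => s y * φ y) F)
    (hint5 : Integrable (fun y => y * s y * φ' y) F)
    (hTI : (∫ y, r y ∂F) / (∫ y, s y ∂F) ∈ I) :
    (∀ x ∈ I,
      ∫ y, S ((∫ y, r y ∂F) / (∫ y, s y ∂F)) y ∂F ≤ ∫ y, S x y ∂F) ∧
    (StrictConvexOn ℝ I φ → ∀ x ∈ I, x ≠ (∫ y, r y ∂F) / (∫ y, s y ∂F) →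
      ∫ y, S ((∫ y, r y ∂F) / (∫ y, s y ∂F)) y ∂F < ∫ y, S x y ∂F) :=
  bregman_consistent_for_ratio_of_expectations_general I r s hspos φ φ' hsub S hSdef F hFI hint1
    hint2 hint3 hint4 hint5 hTI
end

section
/- Any generalized piecewise linear (GPL) scoring function S(x,y) = (1(x ≥ y) − α)(g(x) − g(y)), with g nondecreasing, is consistent for the α-quantile relative to probability measures F with E_F[g(Y)] finite; if g is strictly increasing, S is strictly consistent for the α-quantile. -/
/-!
For `t < x` the expected scores differ by
`(g x - g t) (F(-∞, t] - α) + ∫_{(t, x)} (g x - g y) dF`, and for `x < t` by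
`(g t - g x) (α - F(-∞, t)) + ∫_{(x, t)} (g y - g x) dF`. When `t` is an `α`-quantile and `g` is
nondecreasing, both summands are nonnegative. When `g` is strictly increasing and the difference
vanishes, the first summand forces `F(-∞, t] = α` (resp. `F(-∞, t) = α`) and the second forces
`F(t, x) = 0` (resp. `F(x, t) = 0`), so `x` is an `α`-quantile as well.
-/

open MeasureTheory Set

noncomputable def gplScore (α : ℝ) (g : ℝ → ℝ) (x y : ℝ) : ℝ :=
  ((if y ≤ x then (1:ℝ) else 0) - α) * (g x - g y)

def IsQuantile (F : Measure ℝ) (α x : ℝ) : Prop :=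
  F.real (Iio x) ≤ α ∧ α ≤ F.real (Iic x)

theorem measure_eq_zero_of_setIntegral_eq_zero_of_pos {X : Type*} [MeasurableSpace X]
    {μ : Measure X} {s : Set X} (hs : MeasurableSet s) {f : X → ℝ}
    (hpos : ∀ᵐ y ∂μ, y ∈ s → 0 < f y) (hf : IntegrableOn f s μ)
    (h0 : ∫ y in s, f y ∂μ = 0) : μ s = 0 := by
  have hpos' : ∀ᵐ y ∂μ.restrict s, 0 < f y := (ae_restrict_iff' hs).2 hpos
  have hzero : f =ᵐ[μ.restrict s] 0 :=
    (setIntegral_eq_zero_iff_of_nonneg_ae (hpos'.mono fun _ h => h.le) hf).1 h0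
  have hfalse : ∀ᵐ _ ∂μ.restrict s, False := by
    filter_upwards [hpos', hzero] with y hy hy0
    simp_all
  exact Measure.restrict_eq_zero.1 (ae_eq_bot.1 (Filter.eventually_false_iff_eq_bot.1 hfalse))

section

variable {α : ℝ} {g : ℝ → ℝ} {t x : ℝ}

-- The point `y = x` may be left out of the interval since `g x - g x = 0`.
lemma gplScore_sub_gplScore_of_lt (htx : t < x) (y : ℝ) :
    gplScore α g x y - gplScore α g t y =
      (g x - g t) * ((Iic t).indicator 1 y - α) + (Ioo t x).indicator (fun y => g x - g y) y := by
  simp only [gplScore, indicator_apply, mem_Iic, mem_Ioo, Pi.one_apply]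
  split_ifs <;> grind

lemma gplScore_sub_gplScore_of_gt (hxt : x < t) (y : ℝ) :
    gplScore α g x y - gplScore α g t y =
      (g t - g x) * (α - (Iio t).indicator 1 y) + (Ioo x t).indicator (fun y => g y - g x) y := by
  simp only [gplScore, indicator_apply, mem_Iio, mem_Ioo, Pi.one_apply]
  split_ifs <;> grind

end

section

variable {α : ℝ} {g : ℝ → ℝ} {F : Measure ℝ} [IsProbabilityMeasure F] {I : Set ℝ} {t x : ℝ}

lemma integrable_gplScore (hint : Integrable g F) (x : ℝ) : Integrable (gplScore α g x) F := by
  have hd : Integrable (fun y => g x - g y) F := (integrable_const _).sub hint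
  have hsplit : gplScore α g x =
      fun y => (Iic x).indicator (fun y => g x - g y) y - α * (g x - g y) := by
    ext y
    simp only [gplScore, indicator_apply, mem_Iic]
    split_ifs <;> ring
  rw [hsplit]
  exact (hd.indicator measurableSet_Iic).sub (hd.const_mul α)

lemma integral_gplScore_sub_of_lt (hint : Integrable g F) (htx : t < x) :
    ∫ y, gplScore α g x y ∂F - ∫ y, gplScore α g t y ∂F =
      (g x - g t) * (F.real (Iic t) - α) + ∫ y in Ioo t x, g x - g y ∂F := by
  have hind : Integrable ((Iic t).indicator 1) F :=
    (integrable_const (1:ℝ)).indicator measurableSet_Iic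
  have hatom : Integrable (fun y => (g x - g t) * ((Iic t).indicator 1 y - α)) F :=
    (hind.sub (integrable_const α)).const_mul _
  have hgap : Integrable (fun y => (Ioo t x).indicator (fun y => g x - g y) y) F :=
    ((integrable_const _).sub hint).indicator measurableSet_Ioo
  rw [← integral_sub (integrable_gplScore hint x) (integrable_gplScore hint t)]
  simp_rw [gplScore_sub_gplScore_of_lt htx]
  rw [integral_add hatom hgap, integral_const_mul, integral_sub hind (integrable_const α),
    integral_indicator_one measurableSet_Iic, integral_indicator measurableSet_Ioo,
    integral_const, probReal_univ, one_smul]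

lemma integral_gplScore_sub_of_gt (hint : Integrable g F) (hxt : x < t) :
    ∫ y, gplScore α g x y ∂F - ∫ y, gplScore α g t y ∂F =
      (g t - g x) * (α - F.real (Iio t)) + ∫ y in Ioo x t, g y - g x ∂F := by
  have hind : Integrable ((Iio t).indicator 1) F :=
    (integrable_const (1:ℝ)).indicator measurableSet_Iio
  have hatom : Integrable (fun y => (g t - g x) * (α - (Iio t).indicator 1 y)) F :=
    ((integrable_const α).sub hind).const_mul _
  have hgap : Integrable (fun y => (Ioo x t).indicator (fun y => g y - g x) y) F :=
    (hint.sub (integrable_const _)).indicator measurableSet_Ioo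
  rw [← integral_sub (integrable_gplScore hint x) (integrable_gplScore hint t)]
  simp_rw [gplScore_sub_gplScore_of_gt hxt]
  rw [integral_add hatom hgap, integral_const_mul, integral_sub (integrable_const α) hind,
    integral_indicator_one measurableSet_Iio, integral_indicator measurableSet_Ioo,
    integral_const, probReal_univ, one_smul]

theorem gplScore_consistent_of_lt (hg : MonotoneOn g I) (hFI : ∀ᵐ y ∂F, y ∈ I)
    (hint : Integrable g F) (ht : t ∈ I) (hx : x ∈ I) (htq : α ≤ F.real (Iic t)) (htx : t < x) :
    ∫ y, gplScore α g t y ∂F ≤ ∫ y, gplScore α g x y ∂F ∧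
      (StrictMonoOn g I →
        ∫ y, gplScore α g t y ∂F = ∫ y, gplScore α g x y ∂F → IsQuantile F α x) := by
  have hsub := integral_gplScore_sub_of_lt (α := α) hint htx
  have hatom : 0 ≤ (g x - g t) * (F.real (Iic t) - α) :=
    mul_nonneg (sub_nonneg.2 (hg ht hx htx.le)) (sub_nonneg.2 htq)
  have hgap : 0 ≤ ∫ y in Ioo t x, g x - g y ∂F :=
    setIntegral_nonneg_ae measurableSet_Ioo
      (hFI.mono fun y hy hyI => sub_nonneg.2 (hg hy hx hyI.2.le))
  refine ⟨by linarith, fun hstrict heq => ?_⟩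
  have hFt : F.real (Iic t) = α := by
    have hzero : (g x - g t) * (F.real (Iic t) - α) = 0 := by linarith
    linarith [(mul_eq_zero.1 hzero).resolve_left (sub_ne_zero.2 (hstrict ht hx htx).ne')]
  have hgap0 : F (Ioo t x) = 0 :=
    measure_eq_zero_of_setIntegral_eq_zero_of_pos measurableSet_Ioo
      (hFI.mono fun y hy hyI => sub_pos.2 (hstrict hy hx hyI.2))
      ((integrable_const _).sub hint).integrableOn (by linarith)
  have hFx : F.real (Iio x) = F.real (Iic t) := by
    rw [← Iic_union_Ioo_eq_Iio htx,
      measureReal_union ((Iic_disjoint_Ioi le_rfl).mono_right Ioo_subset_Ioi_self)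
        measurableSet_Ioo,
      measureReal_def (s := Ioo t x), hgap0, ENNReal.toReal_zero, add_zero]
  exact ⟨(hFx.trans hFt).le, hFt ▸ measureReal_mono (Iic_subset_Iic.2 htx.le)⟩

theorem gplScore_consistent_of_gt (hg : MonotoneOn g I) (hFI : ∀ᵐ y ∂F, y ∈ I)
    (hint : Integrable g F) (ht : t ∈ I) (hx : x ∈ I) (htq : F.real (Iio t) ≤ α) (hxt : x < t) :
    ∫ y, gplScore α g t y ∂F ≤ ∫ y, gplScore α g x y ∂F ∧
      (StrictMonoOn g I →
        ∫ y, gplScore α g t y ∂F = ∫ y, gplScore α g x y ∂F → IsQuantile F α x) := by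
  have hsub := integral_gplScore_sub_of_gt (α := α) hint hxt
  have hatom : 0 ≤ (g t - g x) * (α - F.real (Iio t)) :=
    mul_nonneg (sub_nonneg.2 (hg hx ht hxt.le)) (sub_nonneg.2 htq)
  have hgap : 0 ≤ ∫ y in Ioo x t, g y - g x ∂F :=
    setIntegral_nonneg_ae measurableSet_Ioo
      (hFI.mono fun y hy hyI => sub_nonneg.2 (hg hx hy hyI.1.le))
  refine ⟨by linarith, fun hstrict heq => ?_⟩
  have hFt : F.real (Iio t) = α := by
    have hzero : (g t - g x) * (α - F.real (Iio t)) = 0 := by linarith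
    linarith [(mul_eq_zero.1 hzero).resolve_left (sub_ne_zero.2 (hstrict hx ht hxt).ne')]
  have hgap0 : F (Ioo x t) = 0 :=
    measure_eq_zero_of_setIntegral_eq_zero_of_pos measurableSet_Ioo
      (hFI.mono fun y hy hyI => sub_pos.2 (hstrict hx hy hyI.1))
      (hint.sub (integrable_const _)).integrableOn (by linarith)
  have hFx : F.real (Iic x) = F.real (Iio t) := by
    rw [← Iic_union_Ioo_eq_Iio hxt,
      measureReal_union ((Iic_disjoint_Ioi le_rfl).mono_right Ioo_subset_Ioi_self)
        measurableSet_Ioo,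
      measureReal_def (s := Ioo x t), hgap0, ENNReal.toReal_zero, add_zero]
  exact ⟨(measureReal_mono Iio_subset_Iic_self).trans (hFx.trans hFt).le, (hFx.trans hFt).ge⟩

end

theorem gpl_consistent_for_quantile_general
    (α : ℝ)
    (I : Set ℝ)
    (g : ℝ → ℝ) (hg : MonotoneOn g I)
    (F : Measure ℝ) [IsProbabilityMeasure F] (hFI : ∀ᵐ y ∂F, y ∈ I)
    (hint : Integrable (fun y => g y) F) :
    ∀ t ∈ I, ((F (Iio t)).toReal ≤ α ∧ α ≤ (F (Iic t)).toReal) →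
      ∀ x ∈ I,
        (∫ y, ((if y ≤ t then (1:ℝ) else 0) - α) * (g t - g y) ∂F ≤
          ∫ y, ((if y ≤ x then (1:ℝ) else 0) - α) * (g x - g y) ∂F) ∧
        (StrictMonoOn g I →
          (∫ y, ((if y ≤ t then (1:ℝ) else 0) - α) * (g t - g y) ∂F) =
            (∫ y, ((if y ≤ x then (1:ℝ) else 0) - α) * (g x - g y) ∂F) →
          ((F (Iio x)).toReal ≤ α ∧ α ≤ (F (Iic x)).toReal)) := by
  rintro t ht ⟨htlo, hthi⟩ x hx
  rcases lt_trichotomy t x with htx | rfl | hxt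
  · exact gplScore_consistent_of_lt hg hFI hint ht hx hthi htx
  · exact ⟨le_rfl, fun _ _ => ⟨htlo, hthi⟩⟩
  · exact gplScore_consistent_of_gt hg hFI hint ht hx htlo hxt

/-- Theorem 9(b,c) of the paper, sufficiency: any generalized piecewise
linear (GPL) scoring function `S(x,y) = (1(x ≥ y) − α)(g(x) − g(y))` with `g`
nondecreasing is consistent for the α-quantile; if `g` is strictly
increasing, it is strictly consistent. -/
theorem gpl_consistent_for_quantile
    (α : ℝ) (hα : α ∈ Ioo (0:ℝ) 1)
    (I : Set ℝ) (hI : Convex ℝ I)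
    (g : ℝ → ℝ) (hg : MonotoneOn g I)
    (F : Measure ℝ) [IsProbabilityMeasure F] (hFI : ∀ᵐ y ∂F, y ∈ I)
    (hint : Integrable (fun y => g y) F) :
    ∀ t ∈ I, ((F (Iio t)).toReal ≤ α ∧ α ≤ (F (Iic t)).toReal) →
      ∀ x ∈ I,
        (∫ y, ((if y ≤ t then (1:ℝ) else 0) - α) * (g t - g y) ∂F ≤
          ∫ y, ((if y ≤ x then (1:ℝ) else 0) - α) * (g x - g y) ∂F) ∧
        (StrictMonoOn g I →
          (∫ y, ((if y ≤ t then (1:ℝ) else 0) - α) * (g t - g y) ∂F) =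
            (∫ y, ((if y ≤ x then (1:ℝ) else 0) - α) * (g x - g y) ∂F) →
          ((F (Iio x)).toReal ≤ α ∧ α ≤ (F (Iic x)).toReal)) :=
  gpl_consistent_for_quantile_general α I g hg F hFI hint
end

section
/- Any scoring function of the form S(x,y) = |1(x ≥ y) − τ| (φ(y) − φ(x) − φ'(x)(y − x)), where φ is convex with subgradient φ', is consistent for the τ-expectile relative to the class of probability measures F on an interval I for which E_F[Y] and E_F[φ(Y)] exist and are finite; if φ is strictly convex, S is strictly consistent for the τ-expectile. -/
/-!
Write `B(x, y) = φ y - φ x - φ' x (y - x)` and `w_x(y) = |1(y ≤ x) - τ|`, so that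
`S(x, y) = w_x(y) B(x, y)`. The three-point identity
`B(x, y) = B(x, μ) + B(μ, y) + (φ' μ - φ' x)(y - μ)` gives
`S(x, y) - S(μ, y) = w_μ(y) (B(x, μ) - B(x, y)) + w_x(y) B(x, y) + (φ' μ - φ' x) w_μ(y) (y - μ)`.
The last term has expectation zero exactly when `μ` is the τ-expectile. The weights `w_x` and `w_μ`
differ only for `y` between `x` and `μ`, where monotonicity of the subgradient gives
`0 ≤ B(x, y) ≤ B(x, μ)`; hence the first two terms are at least `min τ (1 - τ) · B(x, μ)`,
which is nonnegative, and positive for `x ≠ μ` when `φ` is strictly convex.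
-/

open MeasureTheory Set

noncomputable section

def bregmanDiv (φ φ' : ℝ → ℝ) (x y : ℝ) : ℝ :=
  φ y - φ x - φ' x * (y - x)

def expectileWeight (τ x y : ℝ) : ℝ :=
  |(if y ≤ x then (1 : ℝ) else 0) - τ|

def expectileScore (τ : ℝ) (φ φ' : ℝ → ℝ) (x y : ℝ) : ℝ :=
  expectileWeight τ x y * bregmanDiv φ φ' x y

end

theorem bregmanDiv_three_point (φ φ' : ℝ → ℝ) (x y z : ℝ) :
    bregmanDiv φ φ' x y =
      bregmanDiv φ φ' x z + bregmanDiv φ φ' z y + (φ' z - φ' x) * (y - z) := by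
  unfold bregmanDiv; ring

section Subgradient

variable {I : Set ℝ} {φ φ' : ℝ → ℝ}

theorem bregmanDiv_nonneg (hsub : ∀ x ∈ I, ∀ y ∈ I, φ x + φ' x * (y - x) ≤ φ y)
    {x y : ℝ} (hx : x ∈ I) (hy : y ∈ I) : 0 ≤ bregmanDiv φ φ' x y := by
  have := hsub x hx y hy
  unfold bregmanDiv; linarith

theorem monotoneOn_of_subgradient (hsub : ∀ x ∈ I, ∀ y ∈ I, φ x + φ' x * (y - x) ≤ φ y) :
    MonotoneOn φ' I := by
  intro x hx y hy hxy
  rcases hxy.eq_or_lt with rfl | hlt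
  · rfl
  have hxy := hsub x hx y hy
  have hyx := hsub y hy x hx
  by_contra! h
  nlinarith

theorem bregmanDiv_le_of_mem_uIcc (hI : Convex ℝ I)
    (hsub : ∀ x ∈ I, ∀ y ∈ I, φ x + φ' x * (y - x) ≤ φ y)
    {x y z : ℝ} (hx : x ∈ I) (hz : z ∈ I) (hy : y ∈ uIcc x z) :
    bregmanDiv φ φ' x y ≤ bregmanDiv φ φ' x z := by
  have hyI : y ∈ I := hI.segment_subset hx hz (segment_eq_uIcc x z ▸ hy)
  have hmono := monotoneOn_of_subgradient hsub
  have hcross : 0 ≤ (φ' y - φ' x) * (z - y) := by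
    rcases mem_uIcc.1 hy with ⟨hxy, hyz⟩ | ⟨hzy, hyx⟩
    · exact mul_nonneg (sub_nonneg.2 (hmono hx hyI hxy)) (sub_nonneg.2 hyz)
    · exact mul_nonneg_of_nonpos_of_nonpos (sub_nonpos.2 (hmono hyI hx hyx))
        (sub_nonpos.2 hzy)
  rw [bregmanDiv_three_point φ φ' x z y]
  linarith [bregmanDiv_nonneg hsub hyI hz]

theorem bregmanDiv_pos (hφ : StrictConvexOn ℝ I φ)
    (hsub : ∀ x ∈ I, ∀ y ∈ I, φ x + φ' x * (y - x) ≤ φ y)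
    {x y : ℝ} (hx : x ∈ I) (hy : y ∈ I) (hxy : x ≠ y) : 0 < bregmanDiv φ φ' x y := by
  have hmid : (1 / 2 : ℝ) • x + (1 / 2 : ℝ) • y ∈ I :=
    hφ.1 hx hy (by norm_num) (by norm_num) (by norm_num)
  have hlt := hφ.2 hx hy hxy (by norm_num : (0 : ℝ) < 1 / 2) (by norm_num : (0 : ℝ) < 1 / 2)
    (by norm_num)
  simp only [smul_eq_mul] at hmid hlt
  have := hsub x hx _ hmid
  unfold bregmanDiv; nlinarith

end Subgradient

section ExpectileWeight

variable {τ x y : ℝ}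

theorem expectileWeight_of_le (hτ : τ ≤ 1) (h : y ≤ x) : expectileWeight τ x y = 1 - τ := by
  rw [expectileWeight, if_pos h, abs_of_nonneg (sub_nonneg.2 hτ)]

theorem expectileWeight_of_lt (hτ : 0 ≤ τ) (h : x < y) : expectileWeight τ x y = τ := by
  rw [expectileWeight, if_neg h.not_ge, zero_sub, abs_neg, abs_of_nonneg hτ]

theorem min_le_expectileWeight (hτ₀ : 0 ≤ τ) (hτ₁ : τ ≤ 1) :
    min τ (1 - τ) ≤ expectileWeight τ x y := by
  rcases le_or_gt y x with h | h
  · rw [expectileWeight_of_le hτ₁ h]; exact min_le_right _ _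
  · rw [expectileWeight_of_lt hτ₀ h]; exact min_le_left _ _

theorem norm_expectileWeight_le_one (hτ₀ : 0 ≤ τ) (hτ₁ : τ ≤ 1) :
    ‖expectileWeight τ x y‖ ≤ 1 := by
  have h0 : 0 ≤ expectileWeight τ x y := abs_nonneg _
  rw [Real.norm_of_nonneg h0]
  rcases le_or_gt y x with h | h
  · rw [expectileWeight_of_le hτ₁ h]; linarith
  · rw [expectileWeight_of_lt hτ₀ h]; exact hτ₁

theorem expectileWeight_mul_sub (hτ₀ : 0 ≤ τ) (hτ₁ : τ ≤ 1) :
    expectileWeight τ x y * (y - x) = τ * max (y - x) 0 - (1 - τ) * max (x - y) 0 := by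
  rcases le_or_gt y x with h | h
  · rw [expectileWeight_of_le hτ₁ h, max_eq_right (by linarith), max_eq_left (by linarith)]
    ring
  · rw [expectileWeight_of_lt hτ₀ h, max_eq_left (by linarith), max_eq_right (by linarith)]
    ring

theorem expectileWeight_eq_of_notMem_uIcc {z : ℝ} (hy : y ∉ uIcc x z) :
    expectileWeight τ x y = expectileWeight τ z y := by
  simp only [mem_uIcc, not_or, not_and_or, not_le] at hy
  have hiff : y ≤ x ↔ y ≤ z := by
    constructor <;> intro h <;> rcases hy with ⟨_ | _, _ | _⟩ <;> linarith
  simp only [expectileWeight, hiff]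

theorem measurable_expectileWeight : Measurable (expectileWeight τ x) :=
  ((Measurable.ite measurableSet_Iic measurable_const measurable_const).sub
    measurable_const).abs

end ExpectileWeight

theorem min_mul_bregmanDiv_add_le_expectileScore_sub {τ : ℝ} (hτ₀ : 0 ≤ τ) (hτ₁ : τ ≤ 1)
    {I : Set ℝ} (hI : Convex ℝ I) {φ φ' : ℝ → ℝ}
    (hsub : ∀ x ∈ I, ∀ y ∈ I, φ x + φ' x * (y - x) ≤ φ y)
    {x μ : ℝ} (hx : x ∈ I) (hμ : μ ∈ I) (y : ℝ) :
    min τ (1 - τ) * bregmanDiv φ φ' x μ + (φ' μ - φ' x) * (expectileWeight τ μ y * (y - μ))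
      ≤ expectileScore τ φ φ' x y - expectileScore τ φ φ' μ y := by
  have hB := bregmanDiv_nonneg hsub hx hμ
  have hwμ := min_le_expectileWeight (x := μ) (y := y) hτ₀ hτ₁
  have hdecomp : expectileScore τ φ φ' x y - expectileScore τ φ φ' μ y
      = expectileWeight τ μ y * (bregmanDiv φ φ' x μ - bregmanDiv φ φ' x y)
        + expectileWeight τ x y * bregmanDiv φ φ' x y
        + (φ' μ - φ' x) * (expectileWeight τ μ y * (y - μ)) := by
    rw [expectileScore, expectileScore, bregmanDiv_three_point φ φ' x y μ]; ring
  rw [hdecomp]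
  by_cases hy : y ∈ uIcc x μ
  · have hyI : y ∈ I := hI.segment_subset hx hμ (segment_eq_uIcc x μ ▸ hy)
    have hb := bregmanDiv_nonneg hsub hx hyI
    have hbB := bregmanDiv_le_of_mem_uIcc hI hsub hx hμ hy
    have hwx := min_le_expectileWeight (x := x) (y := y) hτ₀ hτ₁
    linarith [mul_le_mul_of_nonneg_right hwμ (sub_nonneg.2 hbB),
      mul_le_mul_of_nonneg_right hwx hb]
  · rw [expectileWeight_eq_of_notMem_uIcc hy]
    linarith [mul_le_mul_of_nonneg_right hwμ hB]

section Integral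

variable {τ : ℝ} {φ φ' : ℝ → ℝ} {F : Measure ℝ}

theorem integrable_expectileWeight_mul (hτ₀ : 0 ≤ τ) (hτ₁ : τ ≤ 1) {g : ℝ → ℝ}
    (hg : Integrable g F) (x : ℝ) : Integrable (fun y => expectileWeight τ x y * g y) F :=
  hg.bdd_mul measurable_expectileWeight.aestronglyMeasurable
    (Filter.Eventually.of_forall fun _ => norm_expectileWeight_le_one hτ₀ hτ₁)

theorem integrable_bregmanDiv [IsFiniteMeasure F]
    (hint1 : Integrable (fun y => y) F) (hint2 : Integrable (fun y => φ y) F) (x : ℝ) :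
    Integrable (bregmanDiv φ φ' x) F :=
  (hint2.sub (integrable_const _)).sub ((hint1.sub (integrable_const x)).const_mul _)

theorem integrable_expectileScore [IsFiniteMeasure F] (hτ₀ : 0 ≤ τ) (hτ₁ : τ ≤ 1)
    (hint1 : Integrable (fun y => y) F) (hint2 : Integrable (fun y => φ y) F) (x : ℝ) :
    Integrable (expectileScore τ φ φ' x) F :=
  integrable_expectileWeight_mul hτ₀ hτ₁ (integrable_bregmanDiv hint1 hint2 x) x

theorem integral_expectileWeight_mul_sub_eq_zero [IsFiniteMeasure F]
    (hτ₀ : 0 ≤ τ) (hτ₁ : τ ≤ 1) (hint1 : Integrable (fun y => y) F) {μ : ℝ}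
    (hμ : τ * ∫ y, max (y - μ) 0 ∂F = (1 - τ) * ∫ y, max (μ - y) 0 ∂F) :
    ∫ y, expectileWeight τ μ y * (y - μ) ∂F = 0 := by
  have hpos : Integrable (fun y => max (y - μ) 0) F :=
    (hint1.sub (integrable_const μ)).pos_part
  have hneg : Integrable (fun y => max (μ - y) 0) F :=
    ((integrable_const μ).sub hint1).pos_part
  simp only [expectileWeight_mul_sub hτ₀ hτ₁]
  rw [integral_sub (hpos.const_mul τ) (hneg.const_mul (1 - τ)), integral_const_mul,
    integral_const_mul, hμ, sub_self]

theorem integral_expectileScore_add_le (hτ₀ : 0 ≤ τ) (hτ₁ : τ ≤ 1) {I : Set ℝ} (hI : Convex ℝ I)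
    (hsub : ∀ x ∈ I, ∀ y ∈ I, φ x + φ' x * (y - x) ≤ φ y) [IsProbabilityMeasure F]
    (hint1 : Integrable (fun y => y) F) (hint2 : Integrable (fun y => φ y) F)
    {μ : ℝ} (hμI : μ ∈ I)
    (hμ : τ * ∫ y, max (y - μ) 0 ∂F = (1 - τ) * ∫ y, max (μ - y) 0 ∂F) {x : ℝ} (hx : x ∈ I) :
    ∫ y, expectileScore τ φ φ' μ y ∂F + min τ (1 - τ) * bregmanDiv φ φ' x μ
      ≤ ∫ y, expectileScore τ φ φ' x y ∂F := by
  have hscore := integrable_expectileScore (φ' := φ') hτ₀ hτ₁ hint1 hint2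
  have hident : Integrable (fun y => expectileWeight τ μ y * (y - μ)) F :=
    integrable_expectileWeight_mul hτ₀ hτ₁ (hint1.sub (integrable_const μ)) μ
  have hmono : ∫ y, (min τ (1 - τ) * bregmanDiv φ φ' x μ
        + (φ' μ - φ' x) * (expectileWeight τ μ y * (y - μ))) ∂F
      ≤ ∫ y, (expectileScore τ φ φ' x y - expectileScore τ φ φ' μ y) ∂F :=
    integral_mono ((integrable_const _).add (hident.const_mul _))
      ((hscore x).sub (hscore μ))
      (min_mul_bregmanDiv_add_le_expectileScore_sub hτ₀ hτ₁ hI hsub hx hμI)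
  rw [integral_add (integrable_const _) (hident.const_mul _), integral_const_mul (φ' μ - φ' x),
    integral_expectileWeight_mul_sub_eq_zero hτ₀ hτ₁ hint1 hμ,
    integral_sub (hscore x) (hscore μ)] at hmono
  simp only [integral_const, probReal_univ, smul_eq_mul, one_mul, mul_zero, add_zero] at hmono
  linarith

end Integral

theorem expectile_bregman_consistent_general
    (τ : ℝ) (hτ : τ ∈ Ioo (0:ℝ) 1)
    (I : Set ℝ) (hI : Convex ℝ I) (φ φ' : ℝ → ℝ)
    (hsub : ∀ x ∈ I, ∀ y ∈ I, φ x + φ' x * (y - x) ≤ φ y)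
    (S : ℝ → ℝ → ℝ)
    (hSdef : ∀ x y, S x y =
      |(if y ≤ x then (1:ℝ) else 0) - τ| * (φ y - φ x - φ' x * (y - x)))
    (F : Measure ℝ) [IsProbabilityMeasure F]
    (hint1 : Integrable (fun y => y) F) (hint2 : Integrable (fun y => φ y) F)
    (μτ : ℝ) (hμI : μτ ∈ I)
    (hμ : τ * ∫ y, max (y - μτ) 0 ∂F = (1 - τ) * ∫ y, max (μτ - y) 0 ∂F) :
    (∀ x ∈ I, ∫ y, S μτ y ∂F ≤ ∫ y, S x y ∂F) ∧
    (StrictConvexOn ℝ I φ → ∀ x ∈ I, x ≠ μτ →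
      ∫ y, S μτ y ∂F < ∫ y, S x y ∂F) := by
  have hS : S = expectileScore τ φ φ' := funext₂ hSdef
  subst hS
  have hmin : 0 < min τ (1 - τ) := lt_min hτ.1 (sub_pos.2 hτ.2)
  have hgap := fun x (hx : x ∈ I) =>
    integral_expectileScore_add_le hτ.1.le hτ.2.le hI hsub hint1 hint2 hμI hμ hx
  refine ⟨fun x hx => ?_, fun hφ x hx hne => ?_⟩
  · linarith [hgap x hx, mul_nonneg hmin.le (bregmanDiv_nonneg hsub hx hμI)]
  · linarith [hgap x hx, mul_pos hmin (bregmanDiv_pos hφ hsub hx hμI hne)]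

/-- Theorem 10(b,c) of the paper, sufficiency: any scoring function of the
form `S(x,y) = |1(x ≥ y) − τ|(φ(y) − φ(x) − φ'(x)(y−x))`, with `φ` convex
with subgradient `φ'`, is consistent for the τ-expectile; if `φ` is strictly
convex, `S` is strictly consistent. -/
theorem expectile_bregman_consistent
    (τ : ℝ) (hτ : τ ∈ Ioo (0:ℝ) 1)
    (I : Set ℝ) (hI : Convex ℝ I) (φ φ' : ℝ → ℝ)
    (hconv : ConvexOn ℝ I φ)
    (hsub : ∀ x ∈ I, ∀ y ∈ I, φ x + φ' x * (y - x) ≤ φ y)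
    (S : ℝ → ℝ → ℝ)
    (hSdef : ∀ x y, S x y =
      |(if y ≤ x then (1:ℝ) else 0) - τ| * (φ y - φ x - φ' x * (y - x)))
    (F : Measure ℝ) [IsProbabilityMeasure F] (hFI : ∀ᵐ y ∂F, y ∈ I)
    (hint1 : Integrable (fun y => y) F) (hint2 : Integrable (fun y => φ y) F)
    (μτ : ℝ) (hμI : μτ ∈ I)
    (hμ : τ * ∫ y, max (y - μτ) 0 ∂F = (1 - τ) * ∫ y, max (μτ - y) 0 ∂F) :
    (∀ x ∈ I, ∫ y, S μτ y ∂F ≤ ∫ y, S x y ∂F) ∧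
    (StrictConvexOn ℝ I φ → ∀ x ∈ I, x ≠ μτ →
      ∫ y, S μτ y ∂F < ∫ y, S x y ∂F) :=
  expectile_bregman_consistent_general τ hτ I hI φ φ' hsub S hSdef F hint1 hint2 μτ hμI hμ
end

section
/- The asymmetric piecewise quadratic scoring function S_τ(x,y) = |1(x ≥ y) − τ| (x−y)² is strictly consistent for the τ-expectile relative to the class of probability measures on ℝ with finite second moment; i.e., the τ-expectile is the unique minimizer of x ↦ E_F[S_τ(x,Y)]. -/
/-!
Write `S x y` for the score and `V t y = (1 - τ)(t - y)⁺ - τ (y - t)⁺`, so that `∂ₓ S x y = 2 V x y`.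
Since `x ↦ V x y` is piecewise linear with slopes `1 - τ` and `τ`, the score is strongly convex in
`x` with modulus `min τ (1 - τ)`:
`S t y + 2 (x - t) V t y + min τ (1 - τ) (x - t)² ≤ S x y`.
The defining equation of the expectile says exactly that `E_F[V μτ Y] = 0`, so integrating at
`t = μτ` leaves `E_F[S μτ Y] + min τ (1 - τ) (x - μτ)² ≤ E_F[S x Y]`.
-/

open MeasureTheory Set

noncomputable section

namespace Expectile

def score (τ x y : ℝ) : ℝ := |(if y ≤ x then (1:ℝ) else 0) - τ| * (x - y) ^ 2

def identification (τ t y : ℝ) : ℝ := (1 - τ) * max (t - y) 0 - τ * max (y - t) 0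

theorem score_add_le {τ : ℝ} (hτ : τ ∈ Icc (0:ℝ) 1) (t x y : ℝ) :
    score τ t y + 2 * (x - t) * identification τ t y + min τ (1 - τ) * (x - t) ^ 2
      ≤ score τ x y := by
  obtain ⟨h0, h1⟩ := hτ
  have hone : |(1:ℝ) - τ| = 1 - τ := abs_of_nonneg (by linarith)
  have hzero : |(0:ℝ) - τ| = τ := by rw [zero_sub, abs_neg, abs_of_nonneg h0]
  have hm₁ : 0 ≤ τ - min τ (1 - τ) := sub_nonneg.mpr (min_le_left _ _)
  have hm₂ : 0 ≤ (1 - τ) - min τ (1 - τ) := sub_nonneg.mpr (min_le_right _ _)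
  unfold score identification
  rcases le_or_gt y t with hyt | hyt <;> rcases le_or_gt y x with hyx | hyx
  · rw [if_pos hyt, if_pos hyx, hone, max_eq_left (by linarith), max_eq_right (by linarith)]
    nlinarith [sq_nonneg (x - t)]
  · rw [if_pos hyt, if_neg (not_le.mpr hyx), hone, hzero,
      max_eq_left (by linarith), max_eq_right (by linarith)]
    nlinarith [mul_nonneg hm₁ (sq_nonneg (y - x)), mul_nonneg hm₂ (sq_nonneg (t - y)),
      mul_nonneg (mul_nonneg hm₂ (sub_nonneg.mpr hyt)) (sub_nonneg.mpr hyx.le)]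
  · rw [if_neg (not_le.mpr hyt), if_pos hyx, hone, hzero,
      max_eq_right (by linarith), max_eq_left (by linarith)]
    nlinarith [mul_nonneg hm₂ (sq_nonneg (x - y)), mul_nonneg hm₁ (sq_nonneg (y - t)),
      mul_nonneg (mul_nonneg hm₁ (sub_nonneg.mpr hyt.le)) (sub_nonneg.mpr hyx)]
  · rw [if_neg (not_le.mpr hyt), if_neg (not_le.mpr hyx), hzero,
      max_eq_right (by linarith), max_eq_left (by linarith)]
    nlinarith [sq_nonneg (x - t)]

variable {F : Measure ℝ}

theorem integrable_score [IsFiniteMeasure F] (h2 : MemLp (fun y => y) 2 F) (τ x : ℝ) :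
    Integrable (score τ x) F := by
  have hsq : Integrable (fun y : ℝ => (x - y) ^ 2) F := ((memLp_const x).sub h2).integrable_sq
  refine hsq.bdd_mul (c := 1 + |τ|) ?_ (ae_of_all _ fun y => ?_)
  · exact (Measurable.ite measurableSet_Iic measurable_const measurable_const
      |>.sub measurable_const).abs.aestronglyMeasurable
  · rw [Real.norm_eq_abs, abs_abs]
    refine (abs_sub _ _).trans (add_le_add_left ?_ _)
    split_ifs <;> norm_num

theorem integrable_identification [IsFiniteMeasure F] (h1 : Integrable (fun y => y) F)
    (τ t : ℝ) : Integrable (identification τ t) F :=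
  (((integrable_const t).sub h1).pos_part.const_mul _).sub
    ((h1.sub (integrable_const t)).pos_part.const_mul _)

theorem integral_identification_eq_zero [IsFiniteMeasure F] (h1 : Integrable (fun y => y) F)
    {τ t : ℝ} (ht : τ * ∫ y, max (y - t) 0 ∂F = (1 - τ) * ∫ y, max (t - y) 0 ∂F) :
    ∫ y, identification τ t y ∂F = 0 := by
  have hbelow : Integrable (fun y => max (t - y) 0) F := ((integrable_const t).sub h1).pos_part
  have habove : Integrable (fun y => max (y - t) 0) F := (h1.sub (integrable_const t)).pos_part
  unfold identification
  rw [integral_sub (hbelow.const_mul _) (habove.const_mul _), integral_const_mul,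
    integral_const_mul, ht, sub_self]

theorem integral_score_add_le [IsProbabilityMeasure F] (h2 : MemLp (fun y => y) 2 F)
    {τ : ℝ} (hτ : τ ∈ Icc (0:ℝ) 1) {t : ℝ} (hV : ∫ y, identification τ t y ∂F = 0) (x : ℝ) :
    ∫ y, score τ t y ∂F + min τ (1 - τ) * (x - t) ^ 2 ≤ ∫ y, score τ x y ∂F := by
  have hS := integrable_score h2 τ t
  have hV' := (integrable_identification (h2.integrable one_le_two) τ t).const_mul (2 * (x - t))
  have hSV : Integrable (fun y => score τ t y + 2 * (x - t) * identification τ t y) F :=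
    hS.add hV'
  calc ∫ y, score τ t y ∂F + min τ (1 - τ) * (x - t) ^ 2
      = ∫ y, (score τ t y + 2 * (x - t) * identification τ t y
          + min τ (1 - τ) * (x - t) ^ 2) ∂F := by
        rw [integral_add hSV (integrable_const _),
          integral_add hS hV', integral_const_mul, hV]
        simp
    _ ≤ ∫ y, score τ x y ∂F :=
        integral_mono (hSV.add (integrable_const _)) (integrable_score h2 τ x)
          (score_add_le hτ t x)

end Expectile

end

/-- The asymmetric piecewise quadratic scoring function
`S_τ(x,y) = |1(x ≥ y) − τ|(x−y)²` is strictly consistent for the τ-expectile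
relative to probability measures with finite second moment: the τ-expectile
is the unique minimizer of the expected score. -/
theorem asymmetric_quadratic_strictly_consistent_for_expectile
    (τ : ℝ) (hτ : τ ∈ Ioo (0:ℝ) 1)
    (F : Measure ℝ) [IsProbabilityMeasure F]
    (h2 : MemLp (fun y => y) 2 F)
    (μτ : ℝ)
    (hμ : τ * ∫ y, max (y - μτ) 0 ∂F = (1 - τ) * ∫ y, max (μτ - y) 0 ∂F) :
    ∀ x : ℝ,
      (∫ y, |(if y ≤ μτ then (1:ℝ) else 0) - τ| * (μτ - y) ^ 2 ∂F ≤
        ∫ y, |(if y ≤ x then (1:ℝ) else 0) - τ| * (x - y) ^ 2 ∂F) ∧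
      (x ≠ μτ →
        ∫ y, |(if y ≤ μτ then (1:ℝ) else 0) - τ| * (μτ - y) ^ 2 ∂F <
          ∫ y, |(if y ≤ x then (1:ℝ) else 0) - τ| * (x - y) ^ 2 ∂F) := by
  intro x
  have hgap := Expectile.integral_score_add_le h2 (Ioo_subset_Icc_self hτ)
    (Expectile.integral_identification_eq_zero (h2.integrable one_le_two) hμ) x
  unfold Expectile.score at hgap
  have hmin : 0 < min τ (1 - τ) := lt_min hτ.1 (sub_pos.mpr hτ.2)
  refine ⟨?_, fun hx => ?_⟩
  · nlinarith [sq_nonneg (x - μτ)]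
  · have hsq : 0 < (x - μτ) ^ 2 := sq_pos_of_ne_zero (sub_ne_zero.mpr hx)
    nlinarith
end

section
/- Under the relative error scoring function S(x,y) = |(x−y)/x| on (0,∞), the optimal point forecast for Y = Z² with Z having a t-distribution with mean 0, variance 1 and ν = 4 degrees of freedom is x̂ = 2/(2^{2/3} − 1): that is, x̂ is the median of the distribution with density on (0,∞) proportional to y^{1/2}(1 + y/2)^{−5/2}, and this median minimizes x ↦ E[|(x−Y)/x|] over x > 0. -/
open MeasureTheory Set Filter Topology
open scoped ENNReal

/-!
The relative error `|(x - y) / x| = |1 - y t|` is convex in `t = 1 / x`, with subgradient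
`y · sign (y - m)` at `t = 1 / m`. Hence `m` is a Bayes rule as soon as
`∫ y · sign (y - m) dP = 0`, i.e. as soon as `m` splits the size-biased law `y P(dy)` into two
halves of equal mass.

For `Y = Z²` the size-biased law has density `∝ y^{1/2} (1 + y/2)^{-5/2}`, with primitive
`(2/3) (y / (1 + y/2))^{3/2}`. This increases from `0` to `(2/3) 2^{3/2}` and reaches half of it
where `y / (1 + y/2) = 2^{1/3}`, that is at `y = 2 / (2^{2/3} - 1)`.
-/

lemma abs_sub_div_add_le_abs_sub_div {m x : ℝ} (hm : 0 < m) (hx : 0 < x) (y : ℝ) :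
    |(m - y) / m| + (x⁻¹ - m⁻¹) * (if m < y then y else -y) ≤ |(x - y) / x| := by
  split_ifs with hy
  · calc |(m - y) / m| + (x⁻¹ - m⁻¹) * y = (y - x) / x := by
          rw [abs_of_neg (div_neg_of_neg_of_pos (by linarith) hm)]
          field_simp
          ring
      _ ≤ |(x - y) / x| := by rw [← neg_sub, neg_div]; exact neg_le_abs _
  · calc |(m - y) / m| + (x⁻¹ - m⁻¹) * -y = (x - y) / x := by
          rw [abs_of_nonneg (div_nonneg (by linarith) hm.le)]
          field_simp
          ring
      _ ≤ |(x - y) / x| := le_abs_self _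

theorem integral_abs_sub_div_le_of_setIntegral_Iic_eq_Ioi {P : Measure ℝ} [IsFiniteMeasure P]
    {m : ℝ} (hm : 0 < m) (hP : Integrable (fun y => y) P)
    (hbal : ∫ y in Iic m, y ∂P = ∫ y in Ioi m, y ∂P) {x : ℝ} (hx : 0 < x) :
    ∫ y, |(m - y) / m| ∂P ≤ ∫ y, |(x - y) / x| ∂P := by
  have hscore (z : ℝ) : Integrable (fun y => |(z - y) / z|) P :=
    (((integrable_const z).sub hP).div_const z).abs
  set σ : ℝ → ℝ := (Ioi m).piecewise (fun y => y) (fun y => -y)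
  have hσ : Integrable σ P :=
    Integrable.piecewise measurableSet_Ioi hP.integrableOn hP.neg.integrableOn
  have hσ_zero : ∫ y, σ y ∂P = 0 := by
    have := integral_piecewise (g := fun y => -y) (measurableSet_Ioi (a := m)) hP.integrableOn
      hP.neg.integrableOn
    rwa [compl_Ioi, integral_neg, hbal, add_neg_cancel] at this
  calc ∫ y, |(m - y) / m| ∂P = ∫ y, |(m - y) / m| + (x⁻¹ - m⁻¹) * σ y ∂P := by
        rw [integral_add (hscore m) (hσ.const_mul _), integral_const_mul, hσ_zero, mul_zero,
          add_zero]
    _ ≤ ∫ y, |(x - y) / x| ∂P :=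
        integral_mono (hscore m |>.add (hσ.const_mul _)) (hscore x) fun y => by
          simpa [σ, Set.piecewise] using abs_sub_div_add_le_abs_sub_div hm hx y

lemma eq_smul_withDensity_of_forall_apply_eq {α : Type*} [MeasurableSpace α] {μ P : Measure α}
    {c : ℝ≥0∞} {d : α → ℝ≥0∞} {S : Set α}
    (hP : ∀ A, MeasurableSet A → P A = c * ∫⁻ y in A ∩ S, d y ∂μ) :
    P = c • (μ.restrict S).withDensity d := by
  ext A hA
  rw [hP A hA, Measure.smul_apply, withDensity_apply _ hA, Measure.restrict_restrict hA,
    smul_eq_mul]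

namespace SqStudentT4

noncomputable def density (y : ℝ) : ℝ := y ^ (-(1:ℝ)/2) * (1 + y / 2) ^ (-(5:ℝ)/2)

noncomputable def sizeBiasedDensity (y : ℝ) : ℝ := y ^ ((1:ℝ)/2) * (1 + y / 2) ^ (-(5:ℝ)/2)

noncomputable def sizeBiasedPrimitive (y : ℝ) : ℝ := 2 / 3 * (y / (1 + y / 2)) ^ ((3:ℝ)/2)

noncomputable def sizeBiasedMedian : ℝ := 2 / (2 ^ ((2:ℝ)/3) - 1)

lemma measurable_density : Measurable density := by
  unfold density; fun_prop

lemma density_mul_self {y : ℝ} (hy : 0 < y) : density y * y = sizeBiasedDensity y := by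
  rw [density, sizeBiasedDensity, mul_right_comm, ← Real.rpow_add_one hy.ne']
  norm_num

lemma toReal_ofReal_density_mul_self {y : ℝ} (hy : 0 < y) :
    (ENNReal.ofReal (density y)).toReal * y = sizeBiasedDensity y := by
  rw [ENNReal.toReal_ofReal (by unfold density; positivity), density_mul_self hy]

lemma sizeBiasedDensity_nonneg {y : ℝ} (hy : 0 < y) : 0 ≤ sizeBiasedDensity y := by
  unfold sizeBiasedDensity; positivity

lemma hasDerivAt_sizeBiasedPrimitive {y : ℝ} (hy : 0 < y) :
    HasDerivAt sizeBiasedPrimitive (sizeBiasedDensity y) y := by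
  set t := 1 + y / 2 with ht_def
  have ht : 0 < t := by positivity
  have hu : HasDerivAt (fun y : ℝ => y / (1 + y / 2)) (1 / t ^ 2) y := by
    refine ((hasDerivAt_id' y).div (((hasDerivAt_id' y).div_const 2).const_add 1)
      ht.ne').congr_deriv ?_
    field_simp
    ring
  refine (((Real.hasDerivAt_rpow_const (p := (3:ℝ)/2)
    (Or.inl (div_pos hy ht).ne')).comp y hu).const_mul (2 / 3)).congr_deriv ?_
  have hpow : t ^ (-(5:ℝ)/2) = (t ^ ((1:ℝ)/2) * t ^ 2)⁻¹ := by
    rw [← Real.rpow_natCast, ← Real.rpow_add ht, ← Real.rpow_neg ht.le]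
    norm_num
  rw [sizeBiasedDensity, ← ht_def, hpow, Real.div_rpow hy.le ht.le]
  norm_num
  field_simp

lemma continuousAt_sizeBiasedPrimitive {x : ℝ} (hx : 0 ≤ x) :
    ContinuousAt sizeBiasedPrimitive x := by
  have : 1 + x / 2 ≠ 0 := by positivity
  unfold sizeBiasedPrimitive
  fun_prop (disch := first | assumption | norm_num)

lemma tendsto_sizeBiasedPrimitive_atTop :
    Tendsto sizeBiasedPrimitive atTop (𝓝 (2 / 3 * 2 ^ ((3:ℝ)/2))) := by
  have hu : Tendsto (fun y : ℝ => y / (1 + y / 2)) atTop (𝓝 2) := by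
    have : Tendsto (fun y : ℝ => (y⁻¹ + 1 / 2)⁻¹) atTop (𝓝 2) := by
      simpa using (tendsto_inv_atTop_zero.add_const (1 / 2 : ℝ)).inv₀ (by norm_num)
    refine this.congr' ?_
    filter_upwards [eventually_gt_atTop 0] with y hy
    field_simp
  exact ((Real.continuousAt_rpow_const 2 _ (Or.inl two_ne_zero)).tendsto.comp hu).const_mul _

lemma integral_Ioi_sizeBiasedDensity {x : ℝ} (hx : 0 ≤ x) :
    ∫ y in Ioi x, sizeBiasedDensity y = 2 / 3 * 2 ^ ((3:ℝ)/2) - sizeBiasedPrimitive x :=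
  integral_Ioi_of_hasDerivAt_of_nonneg (continuousAt_sizeBiasedPrimitive hx).continuousWithinAt
    (fun _ hy => hasDerivAt_sizeBiasedPrimitive (hx.trans_lt hy))
    (fun _ hy => sizeBiasedDensity_nonneg (hx.trans_lt hy)) tendsto_sizeBiasedPrimitive_atTop

lemma integrableOn_Ioi_sizeBiasedDensity : IntegrableOn sizeBiasedDensity (Ioi 0) :=
  integrableOn_Ioi_deriv_of_nonneg (continuousAt_sizeBiasedPrimitive le_rfl).continuousWithinAt
    (fun _ hy => hasDerivAt_sizeBiasedPrimitive hy) (fun _ hy => sizeBiasedDensity_nonneg hy)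
    tendsto_sizeBiasedPrimitive_atTop

lemma integral_Ioc_sizeBiasedDensity {x : ℝ} (hx : 0 ≤ x) :
    ∫ y in Ioc 0 x, sizeBiasedDensity y = sizeBiasedPrimitive x := by
  have hsplit := setIntegral_union (Ioc_disjoint_Ioi le_rfl) measurableSet_Ioi
    (integrableOn_Ioi_sizeBiasedDensity.mono_set Ioc_subset_Ioi_self)
    (integrableOn_Ioi_sizeBiasedDensity.mono_set (Ioi_subset_Ioi hx))
  have hzero : sizeBiasedPrimitive 0 = 0 := by simp [sizeBiasedPrimitive]
  rw [Ioc_union_Ioi_eq_Ioi hx, integral_Ioi_sizeBiasedDensity le_rfl,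
    integral_Ioi_sizeBiasedDensity hx, hzero] at hsplit
  linarith

lemma sizeBiasedMedian_pos : 0 < sizeBiasedMedian := by
  have : 1 < (2:ℝ) ^ ((2:ℝ)/3) := Real.one_lt_rpow (by norm_num) (by norm_num)
  unfold sizeBiasedMedian
  exact div_pos two_pos (by linarith)

lemma sizeBiasedPrimitive_sizeBiasedMedian :
    sizeBiasedPrimitive sizeBiasedMedian = 2 / 3 * 2 ^ ((3:ℝ)/2) / 2 := by
  set c : ℝ := 2 ^ ((2:ℝ)/3)
  have hc : 1 < c := Real.one_lt_rpow (by norm_num) (by norm_num)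
  have hc_pow : c ^ ((3:ℝ)/2) = 2 := by
    rw [← Real.rpow_mul zero_le_two]; norm_num
  have hmedian : sizeBiasedMedian = 2 / (c - 1) := rfl
  clear_value c
  have hc0 : 0 < c := zero_lt_one.trans hc
  have hratio : sizeBiasedMedian / (1 + sizeBiasedMedian / 2) = 2 / c := by
    have : c - 1 ≠ 0 := by linarith
    rw [hmedian]
    field_simp
    simp [hc0.ne']
  rw [sizeBiasedPrimitive, hratio, Real.div_rpow zero_le_two hc0.le, hc_pow]
  ring

lemma integral_Ioc_sizeBiasedMedian_eq_integral_Ioi :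
    ∫ y in Ioc 0 sizeBiasedMedian, sizeBiasedDensity y =
      ∫ y in Ioi sizeBiasedMedian, sizeBiasedDensity y := by
  rw [integral_Ioc_sizeBiasedDensity sizeBiasedMedian_pos.le,
    integral_Ioi_sizeBiasedDensity sizeBiasedMedian_pos.le, sizeBiasedPrimitive_sizeBiasedMedian]
  ring

lemma integrable_id_of_eq_smul_withDensity {P : Measure ℝ} {c : ℝ≥0∞}
    (hP : P = c • (volume.restrict (Ioi 0)).withDensity fun y => ENNReal.ofReal (density y))
    (hc : c ≠ ∞) : Integrable (fun y => y) P := by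
  rw [hP]
  refine Integrable.smul_measure ?_ hc
  rw [integrable_withDensity_iff_integrable_smul' measurable_density.ennreal_ofReal
    (ae_of_all _ fun _ => ENNReal.ofReal_lt_top)]
  refine integrableOn_Ioi_sizeBiasedDensity.congr_fun (fun y hy => ?_) measurableSet_Ioi
  exact (toReal_ofReal_density_mul_self hy).symm

lemma setIntegral_id_of_eq_smul_withDensity {P : Measure ℝ} {c : ℝ≥0∞}
    (hP : P = c • (volume.restrict (Ioi 0)).withDensity fun y => ENNReal.ofReal (density y))
    {A : Set ℝ} (hA : MeasurableSet A) :
    ∫ y in A, y ∂P = c.toReal * ∫ y in A ∩ Ioi 0, sizeBiasedDensity y := by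
  rw [hP, Measure.restrict_smul, integral_smul_measure, restrict_withDensity hA,
    Measure.restrict_restrict hA, integral_withDensity_eq_integral_toReal_smul
      measurable_density.ennreal_ofReal (ae_of_all _ fun _ => ENNReal.ofReal_lt_top), smul_eq_mul]
  exact congrArg _ (setIntegral_congr_fun (hA.inter measurableSet_Ioi)
    fun y hy => toReal_ofReal_density_mul_self hy.2)

end SqStudentT4

open SqStudentT4

/-- Optimal point forecast under the relative error scoring function
`S(x,y) = |(x−y)/x|` when `Y = Z²` and `Z` is a unit-variance Student-t
variate with ν = 4 degrees of freedom.  Then `Y` has density proportional to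
`f(y) = y^{−1/2}(1 + y/2)^{−5/2}` on `(0,∞)`, and the Bayes rule is
`x̂ = 2/(2^{2/3} − 1)`, the median of the density proportional to
`y f(y) = y^{1/2}(1 + y/2)^{−5/2}`. -/
theorem relative_error_optimal_forecast_t4
    (f : ℝ → ℝ)
    (hf : ∀ y : ℝ, 0 < y →
      f y = y ^ (-(1:ℝ)/2) * (1 + y / 2) ^ (-(5:ℝ)/2))
    (P : Measure ℝ) [IsProbabilityMeasure P]
    (hP : ∀ A : Set ℝ, MeasurableSet A →
      P A = (∫⁻ y in Ioi (0:ℝ), ENNReal.ofReal (f y))⁻¹ *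
        ∫⁻ y in A ∩ Ioi (0:ℝ), ENNReal.ofReal (f y))
    (xhat : ℝ) (hxhat : xhat = 2 / (2 ^ ((2:ℝ)/3) - 1)) :
    -- x̂ is the median of the distribution with density ∝ y^{1/2}(1+y/2)^{−5/2}:
    (∫ y in Ioc (0:ℝ) xhat, y ^ ((1:ℝ)/2) * (1 + y / 2) ^ (-(5:ℝ)/2)) =
      (∫ y in Ioi xhat, y ^ ((1:ℝ)/2) * (1 + y / 2) ^ (-(5:ℝ)/2)) ∧
    -- and x̂ minimizes the expected relative error over x > 0:
    (∀ x ∈ Ioi (0:ℝ),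
      ∫ y, |(xhat - y) / xhat| ∂P ≤ ∫ y, |(x - y) / x| ∂P) := by
  obtain rfl : xhat = sizeBiasedMedian := hxhat
  set c := (∫⁻ y in Ioi (0:ℝ), ENNReal.ofReal (f y))⁻¹
  have hPd :
      P = c • (volume.restrict (Ioi 0)).withDensity fun y => ENNReal.ofReal (density y) := by
    rw [eq_smul_withDensity_of_forall_apply_eq hP]
    congr 1
    exact withDensity_congr_ae (ae_restrict_of_forall_mem measurableSet_Ioi fun y hy => by
      simp only [hf y hy, density])
  have hc : c ≠ ∞ := by
    rintro hc
    have := measure_univ (μ := P)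
    rw [hPd, hc, Measure.smul_apply, smul_eq_mul, ENNReal.top_mul'] at this
    split_ifs at this <;> simp at this
  refine ⟨integral_Ioc_sizeBiasedMedian_eq_integral_Ioi, fun x hx =>
    integral_abs_sub_div_le_of_setIntegral_Iic_eq_Ioi sizeBiasedMedian_pos
      (integrable_id_of_eq_smul_withDensity hPd hc) ?_ hx⟩
  rw [setIntegral_id_of_eq_smul_withDensity hPd measurableSet_Iic,
    setIntegral_id_of_eq_smul_withDensity hPd measurableSet_Ioi, inter_comm, Ioi_inter_Iic,
    Ioi_inter_Ioi, max_eq_left sizeBiasedMedian_pos.le,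
    integral_Ioc_sizeBiasedMedian_eq_integral_Ioi]
end
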